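/- The standard dual equivalence graph G_λ satisfies axiom (ax2): if standard tableaux T, U of shape λ ⊢ n are joined by an i-edge (their reading words differ by an elementary dual equivalence on i−1,i,i+1), then σ(T)_j = −σ(U)_j for j ∈ {i−1, i}, and σ(T)_h = σ(U)_h for all h with h < i−2 or h > i+1. -/

import Mathlib

/-- A semistandard Young tableau (French convention), listed as rows from top
to bottom: positive entries, rows weakly increasing, row lengths weakly
increasing downwards, and entries strictly increasing up columns. -/
def IsSSYT (rows : List (List ℕ)) : Prop :=
  (∀ r ∈ rows, ∀ x ∈ r, 1 ≤ x) ∧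
  (∀ r ∈ rows, r.Chain' (· ≤ ·)) ∧
  rows.Chain' (fun upper lower =>
    upper.length ≤ lower.length ∧
    ∀ c < upper.length, lower.getD c 0 < upper.getD c 0)

/-- The reading word: rows read from top to bottom, left to right. -/
def readingWord (rows : List (List ℕ)) : List ℕ := rows.flatten

/-- A standard Young tableau with entries exactly 1, ..., n. -/
def IsSYT (n : ℕ) (rows : List (List ℕ)) : Prop :=
  IsSSYT rows ∧ (readingWord rows).Perm (List.range' 1 n)

/-- Swap the values x and y in a word. -/
def swapVals (x y : ℕ) (w : List ℕ) : List ℕ :=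
  w.map (fun z => if z = x then y else if z = y then x else z)

/-- Haiman's elementary dual equivalence on the values i-1, i, i+1:
applicable when i is not the middle one of the three (by position), it
exchanges i with the other outer value. -/
def EDE (i : ℕ) (u v : List ℕ) : Prop :=
  2 ≤ i ∧
  ((u.idxOf i < u.idxOf (i + 1) ∧ u.idxOf (i + 1) < u.idxOf (i - 1) ∧
      v = swapVals i (i - 1) u) ∨
   (u.idxOf i < u.idxOf (i - 1) ∧ u.idxOf (i - 1) < u.idxOf (i + 1) ∧
      v = swapVals i (i + 1) u) ∨
   (u.idxOf (i - 1) < u.idxOf (i + 1) ∧ u.idxOf (i + 1) < u.idxOf i ∧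
      v = swapVals i (i - 1) u) ∨
   (u.idxOf (i + 1) < u.idxOf (i - 1) ∧ u.idxOf (i - 1) < u.idxOf i ∧
      v = swapVals i (i + 1) u))

/-- The signature: +1 if j appears to the left of j+1, -1 otherwise. -/
def sgn (w : List ℕ) (j : ℕ) : ℤ :=
  if w.idxOf j < w.idxOf (j + 1) then 1 else -1

/-!
An elementary dual equivalence swaps `i` with one of `i - 1`, `i + 1`, so the positions of all
other values are unchanged and `σ_h` can only change when `{h, h + 1}` meets `{i - 1, i, i + 1}`.
The two swapped values are consecutive and trade places, which flips one of `σ_{i-1}`, `σ_i`;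
the third value lies, by position, between them, so its order relative to `i` reverses too,
which flips the other.
-/

theorem List.idxOf_map_of_injective {α β : Type*} [BEq α] [LawfulBEq α] [BEq β] [LawfulBEq β]
    {f : α → β} (hf : Function.Injective f) (w : List α) (a : α) :
    (w.map f).idxOf (f a) = w.idxOf a := by
  simp only [List.idxOf, List.findIdx_map, Function.comp_def, hf.beq_eq]

section swapVals

variable (x y : ℕ) (w : List ℕ)

theorem swapVals_eq_map_swap : swapVals x y w = w.map (Equiv.swap x y) :=
  rfl

theorem idxOf_swapVals (z : ℕ) : (swapVals x y w).idxOf z = w.idxOf (Equiv.swap x y z) := by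
  rw [swapVals_eq_map_swap, ← Equiv.swap_apply_self x y z,
    List.idxOf_map_of_injective (Equiv.injective _), Equiv.swap_apply_self]

@[simp]
theorem idxOf_swapVals_left : (swapVals x y w).idxOf x = w.idxOf y := by
  rw [idxOf_swapVals, Equiv.swap_apply_left]

@[simp]
theorem idxOf_swapVals_right : (swapVals x y w).idxOf y = w.idxOf x := by
  rw [idxOf_swapVals, Equiv.swap_apply_right]

variable {x y}

@[simp]
theorem idxOf_swapVals_of_ne {z : ℕ} (hx : z ≠ x) (hy : z ≠ y) :
    (swapVals x y w).idxOf z = w.idxOf z := by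
  rw [idxOf_swapVals, Equiv.swap_apply_of_ne_of_ne hx hy]

theorem sgn_swapVals_of_ne {j : ℕ} (hx : j ≠ x) (hy : j ≠ y) (hx' : j + 1 ≠ x)
    (hy' : j + 1 ≠ y) : sgn (swapVals x y w) j = sgn w j := by
  simp only [sgn, idxOf_swapVals_of_ne w hx hy, idxOf_swapVals_of_ne w hx' hy']

end swapVals

theorem sgn_eq_neg_sgn_iff {u v : List ℕ} {j : ℕ} :
    sgn u j = -sgn v j ↔ (u.idxOf j < u.idxOf (j + 1) ↔ ¬v.idxOf j < v.idxOf (j + 1)) := by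
  unfold sgn
  split_ifs <;> simp_all

namespace EDE

variable {i : ℕ} {u v : List ℕ}

theorem sgn_pred_eq_neg (h : EDE i u v) : sgn u (i - 1) = -sgn v (i - 1) := by
  obtain ⟨hi, hc⟩ := h
  rw [sgn_eq_neg_sgn_iff, Nat.sub_add_cancel (by omega : 1 ≤ i)]
  rcases hc with ⟨h₁, h₂, rfl⟩ | ⟨h₁, h₂, rfl⟩ | ⟨h₁, h₂, rfl⟩ | ⟨h₁, h₂, rfl⟩ <;>
    simp (disch := omega) only [idxOf_swapVals_left, idxOf_swapVals_right,
      idxOf_swapVals_of_ne] <;> omega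

theorem sgn_eq_neg (h : EDE i u v) : sgn u i = -sgn v i := by
  obtain ⟨hi, hc⟩ := h
  rw [sgn_eq_neg_sgn_iff]
  rcases hc with ⟨h₁, h₂, rfl⟩ | ⟨h₁, h₂, rfl⟩ | ⟨h₁, h₂, rfl⟩ | ⟨h₁, h₂, rfl⟩ <;>
    simp (disch := omega) only [idxOf_swapVals_left, idxOf_swapVals_right,
      idxOf_swapVals_of_ne] <;> omega

theorem sgn_eq_of_far {j : ℕ} (h : EDE i u v) (hj : j < i - 2 ∨ i + 1 < j) :
    sgn u j = sgn v j := by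
  obtain ⟨hi, hc⟩ := h
  rcases hc with ⟨-, -, rfl⟩ | ⟨-, -, rfl⟩ | ⟨-, -, rfl⟩ | ⟨-, -, rfl⟩ <;>
    exact (sgn_swapVals_of_ne u (by omega) (by omega) (by omega) (by omega)).symm

end EDE

theorem stmt15_general (n i : ℕ) (T U : List (List ℕ))
    (h : EDE i (readingWord T) (readingWord U)) :
    sgn (readingWord T) (i - 1) = - sgn (readingWord U) (i - 1) ∧
    sgn (readingWord T) i = - sgn (readingWord U) i ∧
    (∀ h', 1 ≤ h' → h' + 1 ≤ n → (h' < i - 2 ∨ i + 1 < h') →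
      sgn (readingWord T) h' = sgn (readingWord U) h') :=
  ⟨h.sgn_pred_eq_neg, h.sgn_eq_neg, fun _ _ _ hj => h.sgn_eq_of_far hj⟩

/-- Axiom (ax2): along an i-edge the signature flips in positions i-1 and i
and is unchanged in positions h < i-2 and h > i+1. -/
theorem stmt15 (n i : ℕ) (T U : List (List ℕ)) (hT : IsSYT n T) (hU : IsSYT n U)
    (hsh : U.map List.length = T.map List.length)
    (h : EDE i (readingWord T) (readingWord U)) :
    sgn (readingWord T) (i - 1) = - sgn (readingWord U) (i - 1) ∧
    sgn (readingWord T) i = - sgn (readingWord U) i ∧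
    (∀ h', 1 ≤ h' → h' + 1 ≤ n → (h' < i - 2 ∨ i + 1 < h') →
      sgn (readingWord T) h' = sgn (readingWord U) h') :=
  stmt15_general n i T U h
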